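/- Let m be a positive integer, n an integer, x a real number, and d = gcd(m, n). Then ∑_{k=0}^{m-1} ⌊(x + n·k)/m⌋ = (m−1)(n−1)/2 + (d−1)/2 + d·⌊x/d⌋, where the two fractions combine to an integer (equivalently, 2·∑_{k=0}^{m-1} ⌊(x + n·k)/m⌋ = (m−1)(n−1) + (d−1) + 2d⌊x/d⌋). -/

import Mathlib

open Finset

/-- floor of a real divided by a positive integer -/
private lemma floor_div_int' (y : ℝ) {c : ℤ} (hc : 0 < c) : ⌊y / (c : ℝ)⌋ = ⌊y⌋ / c := by
  have hc' : (0 : ℝ) < (c : ℝ) := by exact_mod_cast hc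
  have h1 : c * (⌊y⌋ / c) + ⌊y⌋ % c = ⌊y⌋ := Int.mul_ediv_add_emod _ _
  have h2 : 0 ≤ ⌊y⌋ % c := Int.emod_nonneg _ hc.ne'
  have h3 : ⌊y⌋ % c < c := Int.emod_lt_of_pos _ hc
  have hfl : (⌊y⌋ : ℝ) ≤ y := Int.floor_le y
  have hfu : y < ⌊y⌋ + 1 := Int.lt_floor_add_one y
  have h1' : (c : ℝ) * ((⌊y⌋ / c : ℤ) : ℝ) + ((⌊y⌋ % c : ℤ) : ℝ) = (⌊y⌋ : ℝ) := by
    exact_mod_cast congrArg (fun z : ℤ => (z : ℝ)) h1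
  have h2' : (0 : ℝ) ≤ ((⌊y⌋ % c : ℤ) : ℝ) := by exact_mod_cast h2
  have h3' : ((⌊y⌋ % c : ℤ) : ℝ) < (c : ℝ) := by exact_mod_cast h3
  refine Int.floor_eq_iff.2 ⟨?_, ?_⟩
  · rw [le_div_iff₀ hc']
    nlinarith
  · rw [div_lt_iff₀ hc']
    have h3'' : ((⌊y⌋ % c : ℤ) : ℝ) + 1 ≤ (c : ℝ) := by exact_mod_cast h3
    push_cast
    nlinarith

/-- rotation bijection on `range M` -/
private lemma rot_sum (M : ℕ) (hM : 0 < M) (c : ℤ) (f : ℤ → ℤ) :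
    ∑ k ∈ range M, f ((c + (k : ℤ)) % (M : ℤ)) = ∑ k ∈ range M, f (k : ℤ) := by
  have hM' : (0 : ℤ) < (M : ℤ) := by exact_mod_cast hM
  refine Finset.sum_nbij' (fun k => ((c + (k : ℤ)) % (M : ℤ)).toNat)
    (fun k => (((k : ℤ) - c) % (M : ℤ)).toNat) ?_ ?_ ?_ ?_ ?_
  · intro k hk
    have h1 := Int.emod_nonneg (c + (k : ℤ)) hM'.ne'
    have h2 := Int.emod_lt_of_pos (c + (k : ℤ)) hM'
    simp only [mem_range]
    omega
  · intro k hk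
    have h1 := Int.emod_nonneg ((k : ℤ) - c) hM'.ne'
    have h2 := Int.emod_lt_of_pos ((k : ℤ) - c) hM'
    simp only [mem_range]
    omega
  · intro k hk
    simp only [mem_range] at hk
    have h1 := Int.emod_nonneg (c + (k : ℤ)) hM'.ne'
    have e1 : (((c + (k : ℤ)) % (M : ℤ)).toNat : ℤ) = (c + (k : ℤ)) % (M : ℤ) :=
      Int.toNat_of_nonneg h1
    have hmod : (c + (k : ℤ)) % (M : ℤ) ≡ c + (k : ℤ) [ZMOD (M : ℤ)] :=
      Int.emod_emod_of_dvd _ dvd_rfl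
    have hmod2 : (c + (k : ℤ)) % (M : ℤ) - c ≡ (k : ℤ) [ZMOD (M : ℤ)] := by
      have := hmod.sub_right c
      simpa using this
    have e2 : ((c + (k : ℤ)) % (M : ℤ) - c) % (M : ℤ) = (k : ℤ) % (M : ℤ) := hmod2
    have e3 : (k : ℤ) % (M : ℤ) = (k : ℤ) :=
      Int.emod_eq_of_lt (by positivity) (by exact_mod_cast hk)
    rw [e1, e2, e3]
    omega
  · intro k hk
    simp only [mem_range] at hk
    have h1 := Int.emod_nonneg ((k : ℤ) - c) hM'.ne'
    have e1 : ((((k : ℤ) - c) % (M : ℤ)).toNat : ℤ) = ((k : ℤ) - c) % (M : ℤ) :=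
      Int.toNat_of_nonneg h1
    have hmod : ((k : ℤ) - c) % (M : ℤ) ≡ (k : ℤ) - c [ZMOD (M : ℤ)] :=
      Int.emod_emod_of_dvd _ dvd_rfl
    have hmod2 : c + ((k : ℤ) - c) % (M : ℤ) ≡ (k : ℤ) [ZMOD (M : ℤ)] := by
      have := hmod.add_left c
      simpa using this
    have e2 : (c + ((k : ℤ) - c) % (M : ℤ)) % (M : ℤ) = (k : ℤ) % (M : ℤ) := hmod2
    have e3 : (k : ℤ) % (M : ℤ) = (k : ℤ) :=
      Int.emod_eq_of_lt (by positivity) (by exact_mod_cast hk)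
    rw [e1, e2, e3]
    omega
  · intro k hk
    have h1 := Int.emod_nonneg (c + (k : ℤ)) hM'.ne'
    rw [Int.toNat_of_nonneg h1]

/-- reflection bijection on `range M` -/
private lemma refl_sum (M : ℕ) (hM : 0 < M) (f : ℤ → ℤ) :
    ∑ k ∈ range M, f ((-(k : ℤ)) % (M : ℤ)) = ∑ k ∈ range M, f (k : ℤ) := by
  have hM' : (0 : ℤ) < (M : ℤ) := by exact_mod_cast hM
  have inv : ∀ k : ℕ, k < M → ((-(((-(k : ℤ)) % (M : ℤ)).toNat : ℤ)) % (M : ℤ)).toNat = k := by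
    intro k hk
    have h1 := Int.emod_nonneg (-(k : ℤ)) hM'.ne'
    have e1 : (((-(k : ℤ)) % (M : ℤ)).toNat : ℤ) = (-(k : ℤ)) % (M : ℤ) :=
      Int.toNat_of_nonneg h1
    have hmod : (-(k : ℤ)) % (M : ℤ) ≡ -(k : ℤ) [ZMOD (M : ℤ)] :=
      Int.emod_emod_of_dvd _ dvd_rfl
    have hmod2 : -((-(k : ℤ)) % (M : ℤ)) ≡ (k : ℤ) [ZMOD (M : ℤ)] := by
      have := hmod.neg
      simpa using this
    have e2 : (-((-(k : ℤ)) % (M : ℤ))) % (M : ℤ) = (k : ℤ) % (M : ℤ) := hmod2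
    have e3 : (k : ℤ) % (M : ℤ) = (k : ℤ) :=
      Int.emod_eq_of_lt (by positivity) (by exact_mod_cast hk)
    rw [e1, e2, e3]
    omega
  refine Finset.sum_nbij' (fun k => ((-(k : ℤ)) % (M : ℤ)).toNat)
    (fun k => ((-(k : ℤ)) % (M : ℤ)).toNat) ?_ ?_ ?_ ?_ ?_
  · intro k hk
    have h1 := Int.emod_nonneg (-(k : ℤ)) hM'.ne'
    have h2 := Int.emod_lt_of_pos (-(k : ℤ)) hM'
    simp only [mem_range]; omega
  · intro k hk
    have h1 := Int.emod_nonneg (-(k : ℤ)) hM'.ne'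
    have h2 := Int.emod_lt_of_pos (-(k : ℤ)) hM'
    simp only [mem_range]; omega
  · intro k hk
    simp only [mem_range] at hk
    exact inv k hk
  · intro k hk
    simp only [mem_range] at hk
    exact inv k hk
  · intro k hk
    have h1 := Int.emod_nonneg (-(k : ℤ)) hM'.ne'
    rw [Int.toNat_of_nonneg h1]

/-- Gauss sum in ℤ -/
private lemma gauss_sum (M : ℕ) (hM : 0 < M) :
    2 * ∑ k ∈ range M, (k : ℤ) = (M : ℤ) * ((M : ℤ) - 1) := by
  have h := Finset.sum_range_id_mul_two M
  have h' : ((∑ i ∈ range M, i : ℕ) : ℤ) = ∑ k ∈ range M, (k : ℤ) := by push_cast; rfl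
  have h2 : ((∑ i ∈ range M, i : ℕ) : ℤ) * 2 = ((M * (M - 1) : ℕ) : ℤ) := by exact_mod_cast h
  rw [h'] at h2
  have h3 : ((M * (M - 1) : ℕ) : ℤ) = (M : ℤ) * ((M : ℤ) - 1) := by
    have h1 : 1 ≤ M := hM
    push_cast [Nat.cast_sub h1]
    ring
  omega

/-- Hermite: sum of `(c+k)/M` over `k < M` equals `c`. -/
private lemma hermite_div (M : ℕ) (hM : 0 < M) (c : ℤ) :
    ∑ k ∈ range M, ((c + (k : ℤ)) / (M : ℤ)) = c := by
  have hM' : (0 : ℤ) < (M : ℤ) := by exact_mod_cast hM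
  have key : ∀ k : ℕ, (M : ℤ) * ((c + (k : ℤ)) / (M : ℤ))
      = (c + (k : ℤ)) - (c + (k : ℤ)) % (M : ℤ) := by
    intro k
    have := Int.mul_ediv_add_emod (c + (k : ℤ)) (M : ℤ)
    linarith
  have hsum : (M : ℤ) * ∑ k ∈ range M, ((c + (k : ℤ)) / (M : ℤ))
      = ∑ k ∈ range M, ((c + (k : ℤ)) - (c + (k : ℤ)) % (M : ℤ)) := by
    rw [Finset.mul_sum]
    exact Finset.sum_congr rfl fun k _ => key k
  rw [Finset.sum_sub_distrib] at hsum
  have hrot : ∑ k ∈ range M, ((c + (k : ℤ)) % (M : ℤ)) = ∑ k ∈ range M, (k : ℤ) :=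
    rot_sum M hM c id
  have hca : ∑ k ∈ range M, (c + (k : ℤ)) = (M : ℤ) * c + ∑ k ∈ range M, (k : ℤ) := by
    rw [Finset.sum_add_distrib, Finset.sum_const, card_range]
    push_cast
    ring
  rw [hrot, hca] at hsum
  have : (M : ℤ) * ∑ k ∈ range M, ((c + (k : ℤ)) / (M : ℤ)) = (M : ℤ) * c := by linarith
  exact mul_left_cancel₀ hM'.ne' this

/-- small shift doesn't change the quotient when `d ∣ t` and `d ∣ m`, `0 ≤ r < d`. -/
private lemma small_div' {m d r t : ℤ} (hm : 0 < m) (hdm : d ∣ m) (hdt : d ∣ t)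
    (hr0 : 0 ≤ r) (hrd : r < d) : (r + t) / m = t / m := by
  have h1 : t % m = t - m * (t / m) := by
    have := Int.mul_ediv_add_emod t m
    linarith
  have h2 : d ∣ t % m := by
    rw [h1]
    exact dvd_sub hdt (hdm.mul_right _)
  have h3 : 0 ≤ t % m := Int.emod_nonneg t hm.ne'
  have h4 : t % m < m := Int.emod_lt_of_pos t hm
  have h6 : d ∣ m - t % m := dvd_sub hdm h2
  have h5 : t % m ≤ m - d := by
    have := Int.le_of_dvd (by omega) h6
    omega
  have step : r + t = (r + t % m) + m * (t / m) := by rw [h1]; ring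
  rw [step, Int.add_mul_ediv_left _ _ hm.ne',
    Int.ediv_eq_zero_of_lt (by omega) (by omega), zero_add]

/-- counting multiples -/
private lemma count_multiples (Q D : ℕ) (hQ : 0 < Q) :
    ((range (Q * D)).filter (fun k => Q ∣ k)).card = D := by
  have himg : ((range (Q * D)).filter (fun k => Q ∣ k)) = (range D).image (· * Q) := by
    ext k
    simp only [mem_filter, mem_range, mem_image]
    constructor
    · rintro ⟨hlt, t, rfl⟩
      exact ⟨t, Nat.lt_of_mul_lt_mul_left hlt, mul_comm t Q⟩
    · rintro ⟨t, ht, rfl⟩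
      refine ⟨?_, ⟨t, mul_comm t Q⟩⟩
      rw [mul_comm Q D]
      exact Nat.mul_lt_mul_of_pos_right ht hQ
  rw [himg, Finset.card_image_of_injective _ (fun a b h => Nat.eq_of_mul_eq_mul_right hQ h),
    card_range]

/-- pairing of residues -/
private lemma emod_add_neg_emod (m a : ℤ) (hm : 0 < m) :
    a % m + (-a) % m = if a % m = 0 then 0 else m := by
  have h1 : 0 ≤ a % m := Int.emod_nonneg a hm.ne'
  have h2 : a % m < m := Int.emod_lt_of_pos a hm
  have h3 : 0 ≤ (-a) % m := Int.emod_nonneg (-a) hm.ne'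
  have h4 : (-a) % m < m := Int.emod_lt_of_pos (-a) hm
  have hdvd : m ∣ a % m + (-a) % m := by
    have ha : a % m ≡ a [ZMOD m] := Int.emod_emod_of_dvd _ dvd_rfl
    have hb : (-a) % m ≡ -a [ZMOD m] := Int.emod_emod_of_dvd _ dvd_rfl
    have hc : a % m + (-a) % m ≡ 0 [ZMOD m] := by
      have := ha.add hb
      simpa using this
    exact (Int.modEq_zero_iff_dvd).1 hc
  rcases hdvd with ⟨u, hu⟩
  by_cases h : a % m = 0
  · have hb0 : (-a) % m = 0 := by
      have hma : m ∣ a := Int.dvd_iff_emod_eq_zero.mpr h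
      exact Int.dvd_iff_emod_eq_zero.mp hma.neg_right
    simp [h, hb0]
  · simp only [h, if_false]
    have hapos : 0 < a % m := lt_of_le_of_ne h1 (Ne.symm h)
    have hu0 : 0 < u := by nlinarith
    have hu2 : u < 2 := by nlinarith
    have hu1 : u = 1 := by omega
    rw [hu, hu1, mul_one]

set_option maxHeartbeats 1000000 in
/-- the main integer identity -/
private lemma main_int (m n X : ℤ) (hm : 0 < m) (d : ℤ) (hd : d = Int.gcd m n) :
    2 * ∑ k ∈ range m.toNat, ((X + n * (k : ℤ)) / m) =
      (m - 1) * (n - 1) + (d - 1) + 2 * d * (X / d) := by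
  obtain ⟨M, rfl⟩ : ∃ M : ℕ, (M : ℤ) = m := ⟨m.toNat, Int.toNat_of_nonneg hm.le⟩
  rw [Int.toNat_natCast]
  set m : ℤ := (M : ℤ) with hmdef
  have hMpos : 0 < M := by
    have h := hm
    rw [hmdef] at h
    exact_mod_cast h
  have hd0 : 0 < d := by
    rw [hd]
    exact_mod_cast Int.gcd_pos_iff.2 (Or.inl hm.ne')
  have hdm : d ∣ m := hd ▸ Int.gcd_dvd_left m n
  have hdn : d ∣ n := hd ▸ Int.gcd_dvd_right m n
  set q : ℤ := m / d with hqdef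
  have hq : m = d * q := by
    rw [hqdef, mul_comm, Int.ediv_mul_cancel hdm]
  have hq0 : 0 < q := by
    rcases lt_or_ge 0 q with h | h
    · exact h
    · exfalso; nlinarith
  set n' : ℤ := n / d with hn'def
  have hn' : n = d * n' := by rw [hn'def, mul_comm, Int.ediv_mul_cancel hdn]
  have hcop : Int.gcd q n' = 1 := by
    have h := Int.gcd_div_gcd_div_gcd (i := m) (j := n)
      (by rw [hd] at hd0; exact_mod_cast hd0)
    rw [hqdef, hn'def, hd]
    exact h
  have hcop' : IsCoprime q n' := Int.isCoprime_iff_gcd_eq_one.2 hcop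
  -- divisibility equivalence
  have hdvd_iff : ∀ k : ℤ, m ∣ n * k ↔ q ∣ k := by
    intro k
    constructor
    · intro h
      rw [hq, hn'] at h
      have h2 : q ∣ n' * k := by
        refine (mul_dvd_mul_iff_left hd0.ne').1 ?_
        rwa [← mul_assoc]
      exact hcop'.dvd_of_dvd_mul_left h2
    · rintro ⟨t, rfl⟩
      rw [hq, hn']
      exact ⟨n' * t, by ring⟩
  -- count of zero residues
  have hdm_le : d ≤ m := Int.le_of_dvd hm hdm
  have hcard : ((range M).filter (fun k : ℕ => (n * (k : ℤ)) % m = 0)).card = d.toNat := by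
    have hPQ : ∀ k : ℕ, ((n * (k : ℤ)) % m = 0) ↔ (q.toNat ∣ k) := by
      intro k
      rw [← Int.dvd_iff_emod_eq_zero, hdvd_iff]
      constructor
      · intro h
        have h' : ((q.toNat : ℤ)) ∣ (k : ℤ) := by
          rwa [Int.toNat_of_nonneg hq0.le]
        exact_mod_cast h'
      · intro h
        have h' : ((q.toNat : ℤ)) ∣ (k : ℤ) := Int.natCast_dvd_natCast.2 h
        rwa [Int.toNat_of_nonneg hq0.le] at h'
    have hfeq : ((range M).filter (fun k : ℕ => (n * (k : ℤ)) % m = 0))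
        = ((range M).filter (fun k : ℕ => q.toNat ∣ k)) := by
      ext k
      simp only [mem_filter, mem_range, hPQ k]
    have hMQD : M = q.toNat * d.toNat := by
      have hqn : ((q.toNat : ℤ)) = q := Int.toNat_of_nonneg hq0.le
      have hdn2 : ((d.toNat : ℤ)) = d := Int.toNat_of_nonneg hd0.le
      have : ((q.toNat * d.toNat : ℕ) : ℤ) = (M : ℤ) := by
        push_cast
        rw [hqn, hdn2]
        rw [hmdef] at hq
        linarith [hq]
      exact_mod_cast this.symm
    rw [hfeq, hMQD]
    exact count_multiples q.toNat d.toNat (by omega)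
  -- residue sum
  have hressum : 2 * ∑ k ∈ range M, ((n * (k : ℤ)) % m) = m * (m - d) := by
    have hrefl : ∑ k ∈ range M, ((n * ((-(k : ℤ)) % m)) % m)
        = ∑ k ∈ range M, ((n * (k : ℤ)) % m) :=
      refl_sum M hMpos (fun t => (n * t) % m)
    have hper : ∀ k : ℕ, (n * ((-(k : ℤ)) % m)) % m = (-(n * (k : ℤ))) % m := by
      intro k
      have h1 : (-(k : ℤ)) % m ≡ -(k : ℤ) [ZMOD m] := Int.emod_emod_of_dvd _ dvd_rfl
      have h2 : n * ((-(k : ℤ)) % m) ≡ n * (-(k : ℤ)) [ZMOD m] := h1.mul_left n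
      have h3 : n * (-(k : ℤ)) = -(n * (k : ℤ)) := by ring
      rw [h3] at h2
      exact h2
    have hrefl2 : ∑ k ∈ range M, ((-(n * (k : ℤ))) % m)
        = ∑ k ∈ range M, ((n * (k : ℤ)) % m) := by
      rw [← hrefl]
      exact Finset.sum_congr rfl fun k _ => (hper k).symm
    have hsplit : 2 * ∑ k ∈ range M, ((n * (k : ℤ)) % m)
        = ∑ k ∈ range M, (((n * (k : ℤ)) % m) + ((-(n * (k : ℤ))) % m)) := by
      rw [Finset.sum_add_distrib, hrefl2]
      ring
    rw [hsplit]
    have hpair : ∀ k : ℕ, ((n * (k : ℤ)) % m) + ((-(n * (k : ℤ))) % m)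
        = if (n * (k : ℤ)) % m = 0 then 0 else m := fun k => emod_add_neg_emod m _ hm
    rw [Finset.sum_congr rfl fun k _ => hpair k]
    rw [Finset.sum_ite, Finset.sum_const_zero, Finset.sum_const, zero_add, nsmul_eq_mul]
    have hcompl := Finset.card_filter_add_card_filter_not
      (s := range M) (p := fun k : ℕ => (n * (k : ℤ)) % m = 0)
    rw [card_range, hcard] at hcompl
    have hdtoNat : ((d.toNat : ℤ)) = d := Int.toNat_of_nonneg hd0.le
    have hcount2 : (((range M).filter (fun k : ℕ => ¬ (n * (k : ℤ)) % m = 0)).card : ℤ)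
        = m - d := by
      have hle : d.toNat ≤ M := by
        have : (d.toNat : ℤ) ≤ (M : ℤ) := by rw [hdtoNat]; exact hdm_le
        exact_mod_cast this
      have : ((range M).filter (fun k : ℕ => ¬ (n * (k : ℤ)) % m = 0)).card = M - d.toNat := by
        omega
      rw [this]
      push_cast [Nat.cast_sub hle]
      rw [hdtoNat]
    rw [hcount2]
    ring
  -- T
  set T : ℤ := ∑ k ∈ range M, ((n * (k : ℤ)) / m) with hT
  have h2T : 2 * T = (m - 1) * (n - 1) + (d - 1) := by
    have hkey : ∀ k : ℕ, m * ((n * (k : ℤ)) / m) = n * (k : ℤ) - (n * (k : ℤ)) % m := by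
      intro k
      have := Int.mul_ediv_add_emod (n * (k : ℤ)) m
      linarith
    have hsum1 : ∑ k ∈ range M, (n * (k : ℤ)) = n * ∑ k ∈ range M, (k : ℤ) :=
      (Finset.mul_sum _ _ _).symm
    have hmT : m * T = n * ∑ k ∈ range M, (k : ℤ) - ∑ k ∈ range M, ((n * (k : ℤ)) % m) := by
      rw [hT, Finset.mul_sum, ← hsum1, ← Finset.sum_sub_distrib]
      exact Finset.sum_congr rfl fun k _ => hkey k
    have hg := gauss_sum M hMpos
    have hmain : m * (2 * T) = m * ((m - 1) * (n - 1) + (d - 1)) := by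
      have e1 : m * (2 * T) = 2 * (m * T) := by ring
      rw [e1, hmT]
      have e2 : 2 * (n * ∑ k ∈ range M, (k : ℤ) - ∑ k ∈ range M, ((n * (k : ℤ)) % m))
          = n * (2 * ∑ k ∈ range M, (k : ℤ)) - 2 * ∑ k ∈ range M, ((n * (k : ℤ)) % m) := by
        ring
      rw [e2, hg, hressum]
      rw [← hmdef]
      ring
    exact mul_left_cancel₀ hm.ne' hmain
  -- Bezout
  have hbez : d = m * Int.gcdA m n + n * Int.gcdB m n := by
    rw [hd]; exact Int.gcd_eq_gcd_ab m n
  set a : ℤ := Int.gcdA m n with hadef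
  set b : ℤ := Int.gcdB m n with hbdef
  set N : ℤ := X / d with hN
  set r : ℤ := X % d with hr
  have hXeq : X = d * N + r := (Int.mul_ediv_add_emod X d).symm
  have hr0 : 0 ≤ r := Int.emod_nonneg X hd0.ne'
  have hrd : r < d := Int.emod_lt_of_pos X hd0
  have hperk : ∀ k : ℕ, (X + n * (k : ℤ)) / m
      = a * N + n * (((k : ℤ) + N * b) / m) + (n * (((k : ℤ) + N * b) % m)) / m := by
    intro k
    set K : ℤ := (k : ℤ) + N * b with hK
    have step1 : X + n * (k : ℤ) = (r + n * K) + m * (a * N) := by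
      rw [hK, hXeq, hbez]; ring
    have step2 : (X + n * (k : ℤ)) / m = (r + n * K) / m + a * N := by
      rw [step1, Int.add_mul_ediv_left _ _ hm.ne']
    have hKdm := Int.mul_ediv_add_emod K m
    have step3 : r + n * K = (r + n * (K % m)) + m * (n * (K / m)) := by
      have hKe : K = m * (K / m) + K % m := (Int.mul_ediv_add_emod K m).symm
      linear_combination n * hKe
    have step4 : (r + n * K) / m = (r + n * (K % m)) / m + n * (K / m) := by
      rw [step3, Int.add_mul_ediv_left _ _ hm.ne']
    have step5 : (r + n * (K % m)) / m = (n * (K % m)) / m :=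
      small_div' hm hdm (hdn.mul_right _) hr0 hrd
    rw [step2, step4, step5]
    ring
  -- sum it up
  have hS : ∑ k ∈ range M, ((X + n * (k : ℤ)) / m) = d * N + T := by
    rw [Finset.sum_congr rfl fun k _ => hperk k]
    rw [Finset.sum_add_distrib, Finset.sum_add_distrib, Finset.sum_const, card_range]
    have t1 : ∑ k ∈ range M, (n * (((k : ℤ) + N * b) / m)) = n * (N * b) := by
      have hh := hermite_div M hMpos (N * b)
      rw [← hmdef] at hh
      have e : ∑ k ∈ range M, (((k : ℤ) + N * b) / m)
          = ∑ k ∈ range M, ((N * b + (k : ℤ)) / m) :=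
        Finset.sum_congr rfl fun k _ => by rw [add_comm]
      rw [← Finset.mul_sum, e, hh]
    have t2 : ∑ k ∈ range M, ((n * (((k : ℤ) + N * b) % m)) / m) = T := by
      have hh := rot_sum M hMpos (N * b) (fun t => (n * t) / m)
      rw [← hmdef] at hh
      have e : ∑ k ∈ range M, ((n * (((k : ℤ) + N * b) % m)) / m)
          = ∑ k ∈ range M, ((n * ((N * b + (k : ℤ)) % m)) / m) :=
        Finset.sum_congr rfl fun k _ => by rw [add_comm ((k : ℤ)) (N * b)]
      rw [e, hh]
    rw [t1, t2, nsmul_eq_mul, ← hmdef]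
    linear_combination (-N) * hbez
  rw [hS]
  linarith [h2T]

theorem concrete_sum (m n : ℤ) (hm : 0 < m) (x : ℝ) (d : ℤ) (hd : d = Int.gcd m n) :
    2 * ∑ k ∈ Finset.range m.toNat, ⌊(x + (n : ℝ) * (k : ℝ)) / (m : ℝ)⌋ =
      (m - 1) * (n - 1) + (d - 1) + 2 * d * ⌊x / (d : ℝ)⌋ := by
  have hd0 : 0 < d := by
    rw [hd]
    exact_mod_cast Int.gcd_pos_iff.2 (Or.inl hm.ne')
  have hfloor : ∀ k : ℕ, ⌊(x + (n : ℝ) * (k : ℝ)) / (m : ℝ)⌋ = (⌊x⌋ + n * (k : ℤ)) / m := by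
    intro k
    rw [floor_div_int' _ hm]
    congr 1
    have h1 : x + (n : ℝ) * (k : ℝ) = x + ((n * (k : ℤ) : ℤ) : ℝ) := by push_cast; ring
    rw [h1, Int.floor_add_intCast]
  have hfloor2 : ⌊x / (d : ℝ)⌋ = ⌊x⌋ / d := floor_div_int' x hd0
  rw [hfloor2, Finset.sum_congr rfl fun k _ => hfloor k]
  exact main_int m n ⌊x⌋ hm d hd
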